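/- (Proposition 3.3, odd-index bound) For every integer m ≥ 0, b(2m+1) ≤ (15/252)·4^m / (2m+3)!!, where (2m+3)!! denotes the double factorial, the product of all odd positive integers up to 2m+3. -/

import Mathlib

/-- `pq n = (p n, q n)` where `p n` (resp. `q n`) is the probability that the
exploitative player X, always guessing `2` or `n-1`, wins the misère search game
`MS(P_n)` against the uniformly random player R when playing first (resp. second):
`p 0 = p 1 = 0`, `q 0 = 0`,
`q n = (1/n) * ∑_{i=1}^{n} ((i-1)·p(i-1) + (n-i)·p(n-i) + 1)/n` for `n ≥ 1`, and
`p n = 1/n + ((n-2)/n) * q (n-2)` for `n ≥ 2`. -/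
noncomputable def pq : ℕ → ℝ × ℝ
  | 0 => (0, 0)
  | 1 =>
    (0,
      (1 / ((1 : ℕ) : ℝ)) * ∑ i ∈ (Finset.Icc 1 1).attach,
        (((i.1 - 1 : ℕ) : ℝ) * (pq (i.1 - 1)).1 +
          ((1 - i.1 : ℕ) : ℝ) * (pq (1 - i.1)).1 + 1) / ((1 : ℕ) : ℝ))
  | n + 2 =>
    (1 / ((n : ℝ) + 2) + ((n : ℝ) / ((n : ℝ) + 2)) * (pq n).2,
      (1 / ((n : ℝ) + 2)) * ∑ i ∈ (Finset.Icc 1 (n + 2)).attach,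
        (((i.1 - 1 : ℕ) : ℝ) * (pq (i.1 - 1)).1 +
          ((n + 2 - i.1 : ℕ) : ℝ) * (pq (n + 2 - i.1)).1 + 1) / ((n : ℝ) + 2))
  decreasing_by
  · have hm := i.2; simp only [Finset.mem_Icc] at hm; omega
  · have hm := i.2; simp only [Finset.mem_Icc] at hm; omega
  · omega
  · have hm := i.2; simp only [Finset.mem_Icc] at hm; omega
  · have hm := i.2; simp only [Finset.mem_Icc] at hm; omega

/-- X's winning probability in `MS(P_n)` playing first. -/
noncomputable def p (n : ℕ) : ℝ := (pq n).1

/-- X's winning probability in `MS(P_n)` playing second. -/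
noncomputable def q (n : ℕ) : ℝ := (pq n).2

/-- `s n = ∑_{i=1}^{n} i * p i`. -/
noncomputable def s (n : ℕ) : ℝ := ∑ i ∈ Finset.Icc 1 n, (i : ℝ) * p i

/-- `a k = (s k + 2(k+1)) / (k² + 7k + 6)`. -/
noncomputable def a (k : ℕ) : ℝ :=
  (s k + 2 * ((k : ℝ) + 1)) / ((k : ℝ) ^ 2 + 7 * (k : ℝ) + 6)

/-- `b k` is the maximum absolute difference between any two of `a k, a (k+1), a (k+2)`. -/
noncomputable def b (k : ℕ) : ℝ :=
  max |a k - a (k + 1)| (max |a (k + 1) - a (k + 2)| |a k - a (k + 2)|)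


open Finset

lemma sum_shift (n : ℕ) : ∑ i ∈ Icc 1 (n+1), ((i - 1 : ℕ) : ℝ) * p (i - 1)
    = ∑ j ∈ Icc 0 n, (j : ℝ) * p j := by
  refine Finset.sum_nbij' (fun i => i - 1) (fun j => j + 1) ?_ ?_ ?_ ?_ ?_ <;>
    intros x hx <;> simp [Finset.mem_Icc] at * <;> omega

lemma sum_refl (n : ℕ) : ∑ i ∈ Icc 1 (n+1), ((n + 1 - i : ℕ) : ℝ) * p (n + 1 - i)
    = ∑ j ∈ Icc 0 n, (j : ℝ) * p j := by
  refine Finset.sum_nbij' (fun i => n + 1 - i) (fun j => n + 1 - j) ?_ ?_ ?_ ?_ ?_ <;>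
    intros x hx <;> simp [Finset.mem_Icc] at * <;> omega

lemma sum_zero_bot (n : ℕ) : ∑ j ∈ Icc 0 n, (j : ℝ) * p j = s n := by
  rw [show Icc 0 n = insert 0 (Icc 1 n) by ext x; simp [Finset.mem_Icc]; omega,
    Finset.sum_insert (by simp)]
  simp [s]

lemma sum_core (n : ℕ) :
    ∑ i ∈ Icc 1 (n+1), (((i - 1 : ℕ) : ℝ) * p (i - 1) + ((n + 1 - i : ℕ) : ℝ) * p (n + 1 - i) + 1)
      = 2 * s n + (n + 1 : ℝ) := by
  rw [Finset.sum_add_distrib, Finset.sum_add_distrib, sum_shift, sum_refl, sum_zero_bot]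
  simp [Nat.card_Icc]
  ring

lemma q_eq (n : ℕ) : q (n+1) = (2 * s n + (n+1 : ℝ)) / ((n:ℝ)+1)^2 := by
  cases n with
  | zero =>
    rw [q, pq]
    dsimp only
    simp only [show ∀ x, (pq x).1 = p x from fun _ => rfl]
    rw [Finset.sum_attach (Finset.Icc 1 1)
      (fun i => (((i - 1 : ℕ) : ℝ) * p (i - 1) + ((1 - i : ℕ) : ℝ) * p (1 - i) + 1) / ((1:ℕ) : ℝ))]
    rw [← Finset.sum_div, sum_core 0]
    norm_num
  | succ k =>
    rw [q, pq]
    dsimp only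
    simp only [show ∀ x, (pq x).1 = p x from fun _ => rfl]
    rw [Finset.sum_attach (Finset.Icc 1 (k+2))
      (fun i => (((i - 1 : ℕ) : ℝ) * p (i - 1) + ((k + 2 - i : ℕ) : ℝ) * p (k + 2 - i) + 1) / ((k:ℝ)+2))]
    show (1 / ((k:ℝ)+2)) * ∑ i ∈ Icc 1 (k+2),
      ((((i - 1 : ℕ) : ℝ)) * p (i - 1) + ((k + 2 - i : ℕ) : ℝ) * p (k + 2 - i) + 1) / ((k:ℝ)+2) = _
    rw [← Finset.sum_div, show k + 2 = (k+1) + 1 from rfl, sum_core (k+1)]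
    have h2 : ((k:ℝ)+2) ≠ 0 := by positivity
    push_cast
    rw [eq_div_iff (by positivity), one_div, inv_mul_eq_div, div_div]
    rw [div_mul_eq_mul_div, div_eq_iff (by positivity)]
    ring

lemma p_eq (n : ℕ) : p (n+3) = 2/((n:ℝ)+3) + 2 * s n / (((n:ℝ)+3)*((n:ℝ)+1)) := by
  have h : p (n+3) = 1/((n:ℝ)+1+2) + (((n:ℝ)+1)/((n:ℝ)+1+2)) * q (n+1) := by
    rw [p, show n+3 = (n+1)+2 from rfl, pq]
    push_cast
    rfl
  rw [h, q_eq n]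
  have h1 : ((n:ℝ)+1) ≠ 0 := by positivity
  have h3 : ((n:ℝ)+3) ≠ 0 := by positivity
  field_simp
  ring

lemma s_succ (n : ℕ) : s (n+1) = s n + ((n:ℝ)+1) * p (n+1) := by
  rw [s, s, Finset.sum_Icc_succ_top (by omega)]
  push_cast; ring

lemma s_rec (n : ℕ) : s (n+3) = s (n+2) + 2 + 2 * s n / ((n:ℝ)+1) := by
  rw [s_succ (n+2), p_eq n]
  have h1 : ((n:ℝ)+1) ≠ 0 := by positivity
  have h3 : ((n:ℝ)+3) ≠ 0 := by positivity
  push_cast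
  field_simp
  ring

lemma s0 : s 0 = 0 := by simp [s]
lemma p1 : p 1 = 0 := by rw [p, pq]
lemma p2 : p 2 = 1/2 := by
  rw [p, show (2:ℕ) = 0+2 from rfl, pq]; norm_num
lemma s1 : s 1 = 0 := by rw [show (1:ℕ) = 0+1 from rfl, s_succ, s0, p1]; norm_num
lemma s2 : s 2 = 1 := by rw [show (2:ℕ) = 1+1 from rfl, s_succ, s1, p2]; norm_num
lemma p3 : p 3 = 2/3 := by rw [show (3:ℕ) = 0+3 from rfl, p_eq, s0]; norm_num
lemma s3 : s 3 = 3 := by rw [show (3:ℕ) = 2+1 from rfl, s_succ, s2, p3]; norm_num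
lemma p4 : p 4 = 1/2 := by rw [show (4:ℕ) = 1+3 from rfl, p_eq, s1]; norm_num
lemma s4 : s 4 = 5 := by rw [show s 4 = s (3+1) from rfl, s_succ, s3, p4]; norm_num
lemma p5 : p 5 = 8/15 := by rw [show (5:ℕ) = 2+3 from rfl, p_eq, s2]; norm_num
lemma s5 : s 5 = 23/3 := by rw [show (5:ℕ) = 4+1 from rfl, s_succ, s4, p5]; norm_num

lemma a1 : a 1 = 2/7 := by rw [a, s1]; norm_num
lemma a2 : a 2 = 7/24 := by rw [a, s2]; norm_num
lemma a3 : a 3 = 11/36 := by rw [a, s3]; norm_num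
lemma a4 : a 4 = 3/10 := by rw [a, s4]; norm_num
lemma a5 : a 5 = 59/198 := by rw [a, s5]; norm_num

lemma a_rec (j : ℕ) :
    (((j:ℝ)+4)*((j:ℝ)+9)) * (a (j+3) - a (j+2)) = -2*((j:ℝ)+6) * (a (j+2) - a j) := by
  have h1 : ((j:ℝ)+1) ≠ 0 := by positivity
  have e0 : ((j:ℝ))^2 + 7*(j:ℝ) + 6 ≠ 0 := by positivity
  have e2 : ((j:ℝ)+2)^2 + 7*((j:ℝ)+2) + 6 ≠ 0 := by positivity
  have e3 : ((j:ℝ)+3)^2 + 7*((j:ℝ)+3) + 6 ≠ 0 := by positivity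
  have hs := s_rec j
  rw [a, a, a]
  push_cast
  field_simp
  rw [hs]
  field_simp
  ring

lemma step_bound (j : ℕ) (E : ℝ) (hE : |a (j+2) - a j| ≤ E) :
    |a (j+3) - a (j+2)| ≤ 2*((j:ℝ)+6)*E / (((j:ℝ)+4)*((j:ℝ)+9)) := by
  have hpos : (0:ℝ) < ((j:ℝ)+4)*((j:ℝ)+9) := by positivity
  have h : a (j+3) - a (j+2) = -2*((j:ℝ)+6) * (a (j+2) - a j) / (((j:ℝ)+4)*((j:ℝ)+9)) := by
    rw [eq_div_iff (ne_of_gt hpos)]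
    linarith [a_rec j]
  rw [h, abs_div, abs_of_pos hpos, div_le_div_iff₀ hpos hpos]
  have : |(-2*((j:ℝ)+6)) * (a (j+2) - a j)| ≤ 2*((j:ℝ)+6)*E := by
    rw [abs_mul]
    have h6 : |(-2*((j:ℝ)+6))| = 2*((j:ℝ)+6) := by
      rw [abs_of_nonpos (by nlinarith [Nat.cast_nonneg (α := ℝ) j] : -2*((j:ℝ)+6) ≤ 0)]
      ring
    rw [h6]
    have : (0:ℝ) ≤ 2*((j:ℝ)+6) := by positivity
    exact mul_le_mul_of_nonneg_left hE this
  nlinarith [abs_nonneg (a (j+2) - a j), hpos]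

lemma dfac_pos (n : ℕ) : (0:ℝ) < ((n.doubleFactorial : ℕ) : ℝ) := by
  exact_mod_cast Nat.doubleFactorial_pos n

lemma arith1 (M F D : ℝ) (hM : 0 ≤ M) (hF : 0 < F) (hD : 0 < D) :
    2*(2*M+1+6) * (2*(5/168 * F / D)) / ((2*M+1+4)*(2*M+1+9)) ≤ 5/168 * (F*4) / ((2*M+5)*D) := by
  rw [div_le_div_iff₀ (by positivity) (by positivity)]
  have e : 2*(2*M+1+6) * (2*(5/168 * F / D)) * ((2*M+5)*D)
      = (5/42) * (2*M+7) * (2*M+5) * F * (D / D) := by ring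
  rw [e, div_self hD.ne']
  nlinarith [mul_pos hF hD, mul_nonneg hM hF.le, mul_nonneg (mul_nonneg hM hM) hF.le]

lemma arith2 (M F D : ℝ) (hM : 0 ≤ M) (hF : 0 < F) (hD : 0 < D) :
    2*(2*M+2+6) * (5/168 * (F*4) / ((2*M+5)*D) + 5/168 * F / D) / ((2*M+2+4)*(2*M+2+9))
      ≤ 5/168 * (F*4) / ((2*M+5)*D) := by
  rw [div_le_div_iff₀ (by positivity) (by positivity)]
  have e : 2*(2*M+2+6) * (5/168 * (F*4) / ((2*M+5)*D) + 5/168 * F / D) * ((2*M+5)*D)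
      = (2*(2*M+8)) * ((5/168) * F * 4 * (((2*M+5)*D) / ((2*M+5)*D)) + (5/168) * F * (2*M+5) * (D/D)) := by
    ring
  rw [e, div_self hD.ne', div_self (by positivity : ((2*M+5)*D) ≠ 0)]
  nlinarith [mul_nonneg hM hF.le, mul_nonneg (mul_nonneg hM hM) hF.le]

lemma main_claim (m : ℕ) (hm : 1 ≤ m) :
    |a (2*m+2) - a (2*m+1)| ≤ 5/168 * 4^m / (((2*m+3).doubleFactorial : ℕ) : ℝ) ∧
    |a (2*m+3) - a (2*m+2)| ≤ 5/168 * 4^m / (((2*m+3).doubleFactorial : ℕ) : ℝ) := by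
  induction m, hm using Nat.le_induction with
  | base =>
    norm_num [a3, a4, a5, show (2*1+3 : ℕ).doubleFactorial = 15 from rfl]
  | succ m hm ih =>
    have hD : (0:ℝ) < (((2*m+3).doubleFactorial : ℕ) : ℝ) := dfac_pos _
    set D : ℝ := (((2*m+3).doubleFactorial : ℕ) : ℝ) with hDdef
    have hF : (0:ℝ) < (4:ℝ)^m := by positivity
    have hM : (0:ℝ) ≤ (m:ℝ) := Nat.cast_nonneg m
    have hsum : |a ((2*m+1)+2) - a (2*m+1)| ≤ 2 * (5/168 * 4^m / D) := by
      have e : a ((2*m+1)+2) - a (2*m+1) =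
          (a (2*m+3) - a (2*m+2)) + (a (2*m+2) - a (2*m+1)) := by norm_num
      rw [e]
      calc |(a (2*m+3) - a (2*m+2)) + (a (2*m+2) - a (2*m+1))|
          ≤ |a (2*m+3) - a (2*m+2)| + |a (2*m+2) - a (2*m+1)| := abs_add_le _ _
        _ ≤ _ := by linarith [ih.1, ih.2]
    have hEven0 := step_bound (2*m+1) _ hsum
    have hEven : |a (2*m+4) - a (2*m+3)| ≤ 5/168 * (4^m*4) / ((2*(m:ℝ)+5) * D) := by
      rw [show (2*m+1)+3 = 2*m+4 from by ring, show (2*m+1)+2 = 2*m+3 from by ring] at hEven0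
      push_cast at hEven0
      exact le_trans hEven0 (arith1 (m:ℝ) (4^m) D hM hF hD)
    have hsum2 : |a ((2*m+2)+2) - a (2*m+2)| ≤
        5/168 * ((4:ℝ)^m*4) / ((2*(m:ℝ)+5) * D) + 5/168 * 4^m / D := by
      have e : a ((2*m+2)+2) - a (2*m+2) =
          (a (2*m+4) - a (2*m+3)) + (a (2*m+3) - a (2*m+2)) := by norm_num
      rw [e]
      calc |(a (2*m+4) - a (2*m+3)) + (a (2*m+3) - a (2*m+2))|
          ≤ |a (2*m+4) - a (2*m+3)| + |a (2*m+3) - a (2*m+2)| := abs_add_le _ _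
        _ ≤ _ := by linarith [ih.2, hEven]
    have hOdd0 := step_bound (2*m+2) _ hsum2
    have hOdd : |a (2*m+5) - a (2*m+4)| ≤ 5/168 * (4^m*4) / ((2*(m:ℝ)+5) * D) := by
      rw [show (2*m+2)+3 = 2*m+5 from by ring, show (2*m+2)+2 = 2*m+4 from by ring] at hOdd0
      push_cast at hOdd0
      exact le_trans hOdd0 (arith2 (m:ℝ) (4^m) D hM hF hD)
    have hgoal : ((((2*m+3+2) * (2*m+3).doubleFactorial : ℕ)) : ℝ) = (2*(m:ℝ)+5) * D := by
      push_cast [hDdef]; ring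
    constructor
    · rw [show 2*(m+1)+2 = 2*m+4 from by ring, show 2*(m+1)+1 = 2*m+3 from by ring,
        show 2*(m+1)+3 = (2*m+3)+2 from by ring, Nat.doubleFactorial_add_two, pow_succ, hgoal]
      exact hEven
    · rw [show 2*(m+1)+3 = (2*m+3)+2 from by ring, Nat.doubleFactorial_add_two, pow_succ, hgoal,
        show (2*m+3)+2 = 2*m+5 from by ring, show 2*(m+1)+2 = 2*m+4 from by ring]
      exact hOdd

/-- Proposition 3.3 (odd-index bound): for every `m ≥ 0`,
`b (2m+1) ≤ (15/252) * 4^m / (2m+3)!!`, where `!!` is the double factorial. -/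
theorem b_odd_bound (m : ℕ) :
    b (2 * m + 1) ≤ (15 / 252) * (4 : ℝ) ^ m / (((2 * m + 3).doubleFactorial : ℕ) : ℝ) := by
  rcases Nat.eq_zero_or_pos m with hm | hm
  · subst hm
    unfold b
    have h3 : ((((2*0+3:ℕ)).doubleFactorial : ℕ) : ℝ) = 3 := by norm_num [Nat.doubleFactorial]
    rw [h3]
    norm_num
    refine ⟨?_, ?_, ?_⟩ <;> rw [abs_le] <;> constructor <;> norm_num [a1, a2, a3]
  · obtain ⟨h1, h2⟩ := main_claim m hm
    have hD : (0:ℝ) < (((2*m+3).doubleFactorial : ℕ) : ℝ) := dfac_pos _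
    have hF : (0:ℝ) < (4:ℝ)^m := by positivity
    have hcb : (0:ℝ) ≤ 5/168 * 4^m / (((2*m+3).doubleFactorial : ℕ) : ℝ) := by positivity
    have hR : (15/252) * (4:ℝ)^m / (((2*m+3).doubleFactorial : ℕ) : ℝ)
        = 2 * (5/168 * 4^m / (((2*m+3).doubleFactorial : ℕ) : ℝ)) := by ring
    unfold b
    rw [show (2*m+1)+1 = 2*m+2 from by ring, show (2*m+1)+2 = 2*m+3 from by ring, hR]
    have e1 : |a (2*m+1) - a (2*m+2)| ≤ 5/168 * 4^m / (((2*m+3).doubleFactorial : ℕ) : ℝ) := by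
      rw [abs_sub_comm]; exact h1
    have e2 : |a (2*m+2) - a (2*m+3)| ≤ 5/168 * 4^m / (((2*m+3).doubleFactorial : ℕ) : ℝ) := by
      rw [abs_sub_comm]; exact h2
    have e3 : |a (2*m+1) - a (2*m+3)| ≤
        2 * (5/168 * 4^m / (((2*m+3).doubleFactorial : ℕ) : ℝ)) := by
      have e : a (2*m+1) - a (2*m+3) = (a (2*m+1) - a (2*m+2)) + (a (2*m+2) - a (2*m+3)) := by ring
      rw [e]
      calc |(a (2*m+1) - a (2*m+2)) + (a (2*m+2) - a (2*m+3))|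
          ≤ |a (2*m+1) - a (2*m+2)| + |a (2*m+2) - a (2*m+3)| := abs_add_le _ _
        _ ≤ _ := by linarith
    refine max_le (by linarith) (max_le (by linarith) e3)
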